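/- arXiv:1507.01258 — 4 statements merged into one kernel-verified Lean document; each statement's English description precedes it below -/
import Mathlib

section
/- Let Q: [0,∞) → [0,∞) be differentiable with Q(0) = 0, Q' nonnegative and non-decreasing, and Q(x) > 0 for x > 0. Let α ∈ (1, ∞). If lim_{x→∞} Q'(xt)/Q'(x) = t^{α−1} uniformly for t in compact subsets of (0,1], then lim_{x→∞} T(x) = α, where T(x) = xQ'(x)/Q(x) for x > 0. -/
open MeasureTheory ProbabilityTheory Filter Set Topology
open scoped ENNReal NNReal Classical

noncomputable section

/-- Remark 3.3 (first direction): if `Q : [0,∞) → [0,∞)` is differentiable with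
`Q(0)=0`, `Q'` nonnegative and non-decreasing, `Q > 0` on `(0,∞)`, and
`Q'(xt)/Q'(x) → t^{α-1}` as `x → ∞` uniformly for `t` in compact subsets of `(0,1]`,
then `T(x) = xQ'(x)/Q(x) → α`. -/
theorem statement_7
    (Q Q' : ℝ → ℝ) (α : ℝ) (hα : 1 < α)
    (hderiv : ∀ x ∈ Set.Ici (0:ℝ), HasDerivWithinAt Q (Q' x) (Set.Ici 0) x)
    (hQ0 : Q 0 = 0)
    (hQ'nonneg : ∀ x ∈ Set.Ici (0:ℝ), 0 ≤ Q' x)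
    (hQ'mono : MonotoneOn Q' (Set.Ici (0:ℝ)))
    (hQpos : ∀ x : ℝ, 0 < x → 0 < Q x)
    (hQnonneg : ∀ x ∈ Set.Ici (0:ℝ), 0 ≤ Q x)
    (hunif : ∀ ε : ℝ, 0 < ε → ε < 1 →
      TendstoUniformlyOn (fun (x : ℝ) (t : ℝ) => Q' (x * t) / Q' x)
        (fun t => t ^ (α - 1)) atTop (Set.Icc ε 1)) :
    Tendsto (fun x : ℝ => x * Q' x / Q x) atTop (𝓝 α) := by
  have hα0 : (0:ℝ) < α := by linarith
  -- Step 0: eventual positivity of Q'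
  have h1 : Tendsto (fun x : ℝ => Q' (x * 1) / Q' x) atTop (𝓝 ((1:ℝ) ^ (α - 1))) :=
    (hunif (1/2) (by norm_num) (by norm_num)).tendsto_at (by norm_num)
  have h1' : ∀ᶠ x in atTop, Q' (x * 1) / Q' x ≠ 0 :=
    h1.eventually_ne (by rw [Real.one_rpow]; norm_num)
  obtain ⟨x₀, hx₀⟩ := eventually_atTop.1 (h1'.and (eventually_ge_atTop 1))
  have hx₀1 : ∀ x : ℝ, x₀ ≤ x → 1 ≤ x := fun x hx => (hx₀ x hx).2
  have hQ'pos : ∀ x : ℝ, x₀ ≤ x → 0 < Q' x := by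
    intro x hx
    have h0 : (0:ℝ) ≤ x := le_trans zero_le_one (hx₀1 x hx)
    rcases lt_or_eq_of_le (hQ'nonneg x h0) with h | h
    · exact h
    · exfalso; exact (hx₀ x hx).1 (by rw [← h, div_zero])
  -- FTC
  have hQcont : ContinuousOn Q (Ici 0) := fun y hy => (hderiv y hy).continuousWithinAt
  have hFTC : ∀ x : ℝ, 0 ≤ x → ∫ u in (0:ℝ)..x, Q' u = Q x := by
    intro x hx
    have hint : IntervalIntegrable Q' volume 0 x := by
      refine (hQ'mono.mono ?_).intervalIntegrable
      rw [uIcc_of_le hx]; exact fun y hy => hy.1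
    have h := intervalIntegral.integral_eq_sub_of_hasDeriv_right_of_le hx
      (hQcont.mono (by rw [← uIcc_of_le hx]; exact fun y hy => le_trans (le_min le_rfl hx) hy.1))
      (fun t ht => (hderiv t ht.1.le).mono (fun y hy => le_trans ht.1.le (le_of_lt hy)))
      hint
    rw [h, hQ0, sub_zero]
  -- integrability of t ↦ Q'(x*t)
  have hmono' : ∀ x : ℝ, 0 < x → ∀ a b : ℝ, 0 ≤ a → 0 ≤ b →
      IntervalIntegrable (fun t => Q' (x * t)) volume a b := by
    intro x hx a b ha hb
    refine MonotoneOn.intervalIntegrable ?_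
    intro t1 ht1 t2 ht2 h12
    have h1 : 0 ≤ t1 := le_trans (le_min ha hb) ht1.1
    have h2 : 0 ≤ t2 := le_trans (le_min ha hb) ht2.1
    exact hQ'mono (mul_nonneg hx.le h1) (mul_nonneg hx.le h2)
      (mul_le_mul_of_nonneg_left h12 hx.le)
  -- key identity
  have hkey : ∀ x : ℝ, x₀ ≤ x →
      (∫ t in (0:ℝ)..1, Q' (x * t) / Q' x) = Q x / (x * Q' x) := by
    intro x hx
    have hxpos : 0 < x := lt_of_lt_of_le one_pos (hx₀1 x hx)
    rw [intervalIntegral.integral_div]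
    rw [intervalIntegral.integral_comp_mul_left (fun u => Q' u) hxpos.ne']
    simp only [mul_zero, mul_one, smul_eq_mul]
    rw [hFTC x hxpos.le]
    rw [inv_mul_eq_div, div_div]
  -- main limit
  have hG : Tendsto (fun x => ∫ t in (0:ℝ)..1, Q' (x * t) / Q' x) atTop (𝓝 α⁻¹) := by
    rw [Metric.tendsto_atTop]
    intro δ hδ
    set ε := min (δ/16) (1/2) with hεdef
    have hε0 : 0 < ε := lt_min (by linarith) (by norm_num)
    have hε1 : ε < 1 := lt_of_le_of_lt (min_le_right _ _) (by norm_num)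
    have hεδ : ε ≤ δ/16 := min_le_left _ _
    have hu := (Metric.tendstoUniformlyOn_iff.1 (hunif ε hε0 hε1)) (δ/8) (by linarith)
    have hpt : Tendsto (fun x => Q' (x * ε) / Q' x) atTop (𝓝 (ε ^ (α - 1))) :=
      (hunif ε hε0 hε1).tendsto_at ⟨le_refl ε, hε1.le⟩
    have hpt2 : ∀ᶠ x in atTop, Q' (x * ε) / Q' x < 2 :=
      hpt.eventually_lt_const
        (lt_of_le_of_lt (Real.rpow_le_one hε0.le hε1.le (by linarith)) one_lt_two)
    obtain ⟨N, hN⟩ := eventually_atTop.1 (hu.and (hpt2.and (eventually_ge_atTop x₀)))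
    refine ⟨N, fun x hx => ?_⟩
    obtain ⟨hux, h2x, hxx₀⟩ := hN x hx
    have hxpos : 0 < x := lt_of_lt_of_le one_pos (hx₀1 x hxx₀)
    have hQ'x : 0 < Q' x := hQ'pos x hxx₀
    -- integrability pieces
    have I0f : IntervalIntegrable (fun t => Q' (x * t) / Q' x) volume 0 ε :=
      (hmono' x hxpos 0 ε le_rfl hε0.le).div_const _
    have Iεf : IntervalIntegrable (fun t => Q' (x * t) / Q' x) volume ε 1 :=
      (hmono' x hxpos ε 1 hε0.le zero_le_one).div_const _
    have Iεg : IntervalIntegrable (fun t => t ^ (α - 1)) volume ε 1 := by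
      refine ContinuousOn.intervalIntegrable ?_
      rw [uIcc_of_le hε1.le]
      exact fun t ht => (Real.continuousAt_rpow_const t (α - 1)
        (Or.inl (ne_of_gt (lt_of_lt_of_le hε0 ht.1)))).continuousWithinAt
    -- values of rpow integrals
    have hαexp : α - 1 + 1 = α := by ring
    have gε1 : (∫ t in ε..1, t ^ (α - 1)) = (1 - ε ^ α) / α := by
      rw [integral_rpow (Or.inl (by linarith)), hαexp, Real.one_rpow]
    -- bounds on [0, ε] piece
    have b1 : 0 ≤ ∫ t in (0:ℝ)..ε, Q' (x * t) / Q' x := by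
      refine intervalIntegral.integral_nonneg hε0.le (fun t ht => ?_)
      exact div_nonneg (hQ'nonneg _ (mul_nonneg hxpos.le ht.1)) hQ'x.le
    have b2 : (∫ t in (0:ℝ)..ε, Q' (x * t) / Q' x) ≤ 2 * ε := by
      have hle : (∫ t in (0:ℝ)..ε, Q' (x * t) / Q' x) ≤
          ∫ _t in (0:ℝ)..ε, Q' (x * ε) / Q' x := by
        refine intervalIntegral.integral_mono_on hε0.le I0f intervalIntegrable_const
          (fun t ht => ?_)
        refine (div_le_div_iff_of_pos_right hQ'x).2 ?_
        exact hQ'mono (mul_nonneg hxpos.le ht.1) (mul_nonneg hxpos.le hε0.le)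
          (mul_le_mul_of_nonneg_left ht.2 hxpos.le)
      rw [intervalIntegral.integral_const, smul_eq_mul, sub_zero] at hle
      have hr0 : 0 ≤ Q' (x * ε) / Q' x :=
        div_nonneg (hQ'nonneg _ (mul_nonneg hxpos.le hε0.le)) hQ'x.le
      nlinarith [hε0.le]
    have b3 : (0:ℝ) ≤ ε ^ α / α :=
      div_nonneg (Real.rpow_nonneg hε0.le α) hα0.le
    have b4 : ε ^ α / α ≤ ε := by
      have h1 : ε ^ α ≤ ε ^ (1:ℝ) :=
        Real.rpow_le_rpow_of_exponent_ge hε0 hε1.le (by linarith)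
      rw [Real.rpow_one] at h1
      have h2 : ε ^ α / α ≤ ε ^ α :=
        div_le_self (Real.rpow_nonneg hε0.le α) hα.le
      linarith
    -- bound on [ε,1] piece
    have b5 : |(∫ t in ε..1, Q' (x * t) / Q' x) - (1 - ε ^ α) / α| ≤ δ / 8 := by
      rw [← gε1, ← intervalIntegral.integral_sub Iεf Iεg]
      have hb := intervalIntegral.norm_integral_le_of_norm_le_const
        (C := δ/8) (f := fun t => Q' (x * t) / Q' x - t ^ (α - 1)) (a := ε) (b := 1) ?_
      · rw [Real.norm_eq_abs] at hb
        refine le_trans hb ?_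
        rw [abs_of_nonneg (by linarith : (0:ℝ) ≤ 1 - ε)]
        nlinarith
      · intro t ht
        rw [uIoc_of_le hε1.le] at ht
        rw [Real.norm_eq_abs, abs_sub_comm, ← Real.dist_eq]
        exact le_of_lt (hux t ⟨ht.1.le, ht.2⟩)
    -- combine
    have hsplit : (∫ t in (0:ℝ)..1, Q' (x * t) / Q' x) =
        (∫ t in (0:ℝ)..ε, Q' (x * t) / Q' x) + ∫ t in ε..1, Q' (x * t) / Q' x :=
      (intervalIntegral.integral_add_adjacent_intervals I0f Iεf).symm
    have hαsplit : α⁻¹ = ε ^ α / α + (1 - ε ^ α) / α := by field_simp; ring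
    rw [Real.dist_eq, hsplit, hαsplit]
    have habs : |(∫ t in (0:ℝ)..ε, Q' (x * t) / Q' x) - ε ^ α / α| ≤ 2 * ε :=
      abs_le.2 ⟨by linarith, by linarith⟩
    calc |(∫ t in (0:ℝ)..ε, Q' (x * t) / Q' x) + (∫ t in ε..1, Q' (x * t) / Q' x)
        - (ε ^ α / α + (1 - ε ^ α) / α)|
        ≤ |(∫ t in (0:ℝ)..ε, Q' (x * t) / Q' x) - ε ^ α / α|
          + |(∫ t in ε..1, Q' (x * t) / Q' x) - (1 - ε ^ α) / α| := by
          rw [add_sub_add_comm]; exact abs_add_le _ _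
      _ ≤ 2 * ε + δ / 8 := add_le_add habs b5
      _ < δ := by linarith
  -- conclude
  have hinv : Tendsto (fun x => (∫ t in (0:ℝ)..1, Q' (x * t) / Q' x)⁻¹) atTop (𝓝 α⁻¹⁻¹) :=
    hG.inv₀ (inv_ne_zero hα0.ne')
  rw [inv_inv] at hinv
  refine hinv.congr' ?_
  filter_upwards [eventually_ge_atTop x₀] with x hx
  rw [hkey x hx, inv_div]
end
end

section
/- Let W = e^{−Q} ∈ F(C²) with Q even, and suppose the function T(t) = tQ'(t)/Q(t) satisfies lim_{x→∞} T(x) = ∞. Then for each fixed τ ∈ (0,1), lim_{n→∞} a_n τ Q'(a_n τ)/n = 0, where a_n is the Mhaskar–Rakhmanov–Saff number. -/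
open MeasureTheory ProbabilityTheory Filter Set Topology
open scoped ENNReal NNReal Classical

noncomputable section

/-- The class `F(C²)` of Levin–Lubinsky: conditions on `Q` (with derivative `Q'` and
second derivative `Q''` away from the origin) so that `W = e^{-Q} ∈ F(C²)`. -/
structure IsFC2 (Q Q' Q'' : ℝ → ℝ) : Prop where
  nonneg : ∀ x, 0 ≤ Q x
  hasDeriv : ∀ x, HasDerivAt Q (Q' x) x
  contDeriv : Continuous Q'
  zeroAtZero : Q 0 = 0
  monoDeriv : Monotone Q'
  hasDeriv2 : ∀ x ≠ 0, HasDerivAt Q' (Q'' x) x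
  tendstoTop : Tendsto Q atTop atTop
  tendstoBot : Tendsto Q atBot atTop
  quasiIncr : ∃ C > 0, ∀ x y : ℝ, 0 < x → x < y →
      x * Q' x / Q x ≤ C * (y * Q' y / Q y)
  quasiIncrNeg : ∃ C > 0, ∀ x y : ℝ, y < x → x < 0 →
      x * Q' x / Q x ≤ C * (y * Q' y / Q y)
  lambdaBound : ∃ Λ > 1, ∀ t : ℝ, t ≠ 0 → Λ ≤ t * Q' t / Q t
  derivRatio : ∃ C > 0, ∀ x : ℝ, x ≠ 0 → Q'' x / |Q' x| ≤ C * (|Q' x| / Q x)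

/-- The Mhaskar–Rakhmanov–Saff numbers `a n > 0` for an even external field `Q`,
defined by `(2/π) ∫₀¹ aₙ t Q'(aₙ t)/√(1-t²) dt = n`. -/
def IsMRSeven (Q' : ℝ → ℝ) (a : ℕ → ℝ) : Prop :=
  ∀ n : ℕ, 1 ≤ n → 0 < a n ∧
    (2 / Real.pi) * ∫ t in (0:ℝ)..1, a n * t * Q' (a n * t) / Real.sqrt (1 - t ^ 2)
      = (n : ℝ)

set_option maxHeartbeats 2000000 in
/-- Equation (3.10) in the proof of Lemma 3.2: for `W = e^{-Q} ∈ F(C²)` with `Q` even and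
`T(x) = xQ'(x)/Q(x) → ∞`, for each fixed `τ ∈ (0,1)` one has
`lim aₙ τ Q'(aₙ τ)/n = 0`. -/
theorem statement_15
    (Q Q' Q'' W : ℝ → ℝ) (hW : ∀ x, W x = Real.exp (-Q x))
    (hFC2 : IsFC2 Q Q' Q'')
    (hQeven : ∀ x, Q (-x) = Q x)
    (hT : Tendsto (fun x : ℝ => x * Q' x / Q x) atTop atTop)
    (an : ℕ → ℝ) (han : IsMRSeven Q' an)
    (τ : ℝ) (hτ0 : 0 < τ) (hτ1 : τ < 1) :
    Tendsto (fun n : ℕ => an n * τ * Q' (an n * τ) / n) atTop (𝓝 0) := by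
  obtain ⟨Λ, hΛ1, hΛ⟩ := hFC2.lambdaBound
  obtain ⟨C, hC0, hC⟩ := hFC2.quasiIncr
  have hpi : (0:ℝ) < 2 / Real.pi := by positivity
  -- Q' 0 = 0
  have hQ'0 : Q' 0 = 0 := by
    have h1 : HasDerivAt (fun x : ℝ => Q (-x)) (Q' (-(0:ℝ)) * (-1)) 0 :=
      (hFC2.hasDeriv (-(0:ℝ))).comp 0 (hasDerivAt_neg 0)
    have h2 : HasDerivAt Q (Q' 0 * (-1)) 0 := by
      have : (fun x : ℝ => Q (-x)) = Q := funext hQeven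
      rw [neg_zero] at h1
      rwa [this] at h1
    have := (hFC2.hasDeriv 0).unique h2
    linarith
  have hQ'nn : ∀ x : ℝ, 0 ≤ x → 0 ≤ Q' x := fun x hx => hQ'0 ▸ hFC2.monoDeriv hx
  have hQpos : ∀ t : ℝ, t ≠ 0 → 0 < Q t := by
    intro t ht
    rcases (hFC2.nonneg t).lt_or_eq with h | h
    · exact h
    · have := hΛ t ht
      rw [← h, div_zero] at this
      linarith
  -- monotonicity of u ↦ u * Q' u on [0,∞)
  have hmono : ∀ u v : ℝ, 0 ≤ u → u ≤ v → u * Q' u ≤ v * Q' v := by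
    intro u v hu huv
    calc u * Q' u ≤ v * Q' u := mul_le_mul_of_nonneg_right huv (hQ'nn u hu)
      _ ≤ v * Q' v := mul_le_mul_of_nonneg_left (hFC2.monoDeriv huv) (hu.trans huv)
  -- tangent line inequality (convexity)
  have htan : ∀ x y : ℝ, x < y → Q x + Q' x * (y - x) ≤ Q y := by
    intro x y hxy
    obtain ⟨c, hc, hc2⟩ := exists_hasDerivAt_eq_slope Q Q' hxy
      (fun z _ => (hFC2.hasDeriv z).continuousAt.continuousWithinAt)
      (fun z _ => hFC2.hasDeriv z)
    have h1 : Q' x ≤ Q' c := hFC2.monoDeriv hc.1.le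
    have h2 : Q' c * (y - x) = Q y - Q x := by
      rw [hc2, div_mul_cancel₀ _ (sub_ne_zero.mpr hxy.ne')]
    nlinarith [sub_pos.mpr hxy]
  -- the integrand
  set F : ℕ → ℝ → ℝ := fun n t => an n * t * Q' (an n * t) / Real.sqrt (1 - t ^ 2)
    with hF
  clear_value F
  -- integrability of the integrand, from the defining equation
  have hInt : ∀ n : ℕ, 1 ≤ n → IntervalIntegrable (F n) volume 0 1 := by
    intro n hn
    by_contra h
    have heq : 2 / Real.pi * ∫ t in (0:ℝ)..1, F n t = (n:ℝ) := by
      simp only [hF]; exact (han n hn).2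
    rw [intervalIntegral.integral_undef h, mul_zero] at heq
    have : (n:ℝ) ≥ 1 := by exact_mod_cast hn
    linarith
  -- nonnegativity of the integrand
  have hFnn : ∀ n : ℕ, 0 < an n → ∀ t : ℝ, 0 ≤ t → 0 ≤ F n t := by
    intro n han0 t ht
    simp only [hF]
    apply div_nonneg _ (Real.sqrt_nonneg _)
    exact mul_nonneg (mul_nonneg han0.le ht) (hQ'nn _ (mul_nonneg han0.le ht))
  -- fixed auxiliary points
  set τ' : ℝ := (2 * τ + 1) / 3 with hτ'
  clear_value τ'
  set b : ℝ := (τ + 2) / 3 with hb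
  clear_value b
  have hττ' : τ < τ' := by rw [hτ']; linarith
  have hτ'0 : 0 < τ' := lt_trans hτ0 hττ'
  have hτ'b : τ' < b := by rw [hτ', hb]; linarith
  have hb1 : b < 1 := by rw [hb]; linarith
  -- lower bound on n
  have hlow : ∀ n : ℕ, 1 ≤ n →
      2 / Real.pi * ((b - τ') * (an n * τ' * Q' (an n * τ'))) ≤ (n:ℝ) := by
    intro n hn
    obtain ⟨hapos, heq0⟩ := han n hn
    have heq : 2 / Real.pi * ∫ t in (0:ℝ)..1, F n t = (n:ℝ) := by
      simp only [hF]; exact heq0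
    have h01 := hInt n hn
    have hsub : ∀ p q : ℝ, 0 ≤ p → p ≤ q → q ≤ 1 →
        IntervalIntegrable (F n) volume p q := by
      intro p q hp hpq hq
      refine h01.mono_set ?_
      rw [uIcc_of_le hpq, uIcc_of_le zero_le_one]
      exact Icc_subset_Icc hp hq
    have I1 := hsub 0 τ' le_rfl hτ'0.le (by linarith)
    have I2 := hsub τ' b hτ'0.le hτ'b.le hb1.le
    have I3 := hsub b 1 (by linarith [hτ'0, hτ'b]) hb1.le le_rfl
    have I12 := hsub 0 b le_rfl (by linarith) hb1.le
    have hadd1 : (∫ t in (0:ℝ)..τ', F n t) + ∫ t in τ'..b, F n t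
        = ∫ t in (0:ℝ)..b, F n t :=
      intervalIntegral.integral_add_adjacent_intervals I1 I2
    have hadd2 : (∫ t in (0:ℝ)..b, F n t) + ∫ t in b..1, F n t
        = ∫ t in (0:ℝ)..1, F n t :=
      intervalIntegral.integral_add_adjacent_intervals I12 I3
    have hpos1 : 0 ≤ ∫ t in (0:ℝ)..τ', F n t :=
      intervalIntegral.integral_nonneg hτ'0.le (fun t ht => hFnn n hapos t ht.1)
    have hpos3 : 0 ≤ ∫ t in b..1, F n t :=
      intervalIntegral.integral_nonneg hb1.le
        (fun t ht => hFnn n hapos t (by linarith [ht.1, hτ'0, hτ'b]))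
    have hmid : (b - τ') * (an n * τ' * Q' (an n * τ')) ≤ ∫ t in τ'..b, F n t := by
      have hptwise : ∀ t ∈ Icc τ' b,
          an n * τ' * Q' (an n * τ') ≤ F n t := by
        intro t ht
        have ht0 : 0 < t := lt_of_lt_of_le hτ'0 ht.1
        have ht1 : t < 1 := lt_of_le_of_lt ht.2 hb1
        have hsq1 : 1 - t ^ 2 ≤ 1 := by nlinarith
        have hsqpos : 0 < Real.sqrt (1 - t ^ 2) := Real.sqrt_pos.mpr (by nlinarith)
        have hsqle : Real.sqrt (1 - t ^ 2) ≤ 1 := Real.sqrt_le_one.mpr hsq1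
        have hnum : an n * τ' * Q' (an n * τ') ≤ an n * t * Q' (an n * t) := by
          have h := hmono (an n * τ') (an n * t)
            (mul_nonneg hapos.le hτ'0.le)
            (mul_le_mul_of_nonneg_left ht.1 hapos.le)
          calc an n * τ' * Q' (an n * τ') = an n * τ' * Q' (an n * τ') := rfl
            _ ≤ an n * t * Q' (an n * t) := h
        have hnum0 : 0 ≤ an n * τ' * Q' (an n * τ') :=
          mul_nonneg (mul_nonneg hapos.le hτ'0.le)
            (hQ'nn _ (mul_nonneg hapos.le hτ'0.le))
        simp only [hF]
        rw [le_div_iff₀ hsqpos]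
        nlinarith
      have h := intervalIntegral.integral_mono_on hτ'b.le
        (intervalIntegrable_const (c := an n * τ' * Q' (an n * τ'))) I2 hptwise
      rwa [intervalIntegral.integral_const, smul_eq_mul] at h
    have hsum : (b - τ') * (an n * τ' * Q' (an n * τ')) ≤ ∫ t in (0:ℝ)..1, F n t := by
      linarith
    calc 2 / Real.pi * ((b - τ') * (an n * τ' * Q' (an n * τ')))
        ≤ 2 / Real.pi * ∫ t in (0:ℝ)..1, F n t :=
          mul_le_mul_of_nonneg_left hsum hpi.le
      _ = (n:ℝ) := heq
  -- an → ∞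
  have haTop : Tendsto an atTop atTop := by
    rw [tendsto_atTop]
    intro B
    set B' : ℝ := max B 1 with hB'
    clear_value B'
    have hB'1 : (1:ℝ) ≤ B' := by rw [hB']; exact le_max_right _ _
    have hB'0 : (0:ℝ) < B' := by linarith
    set g : ℝ → ℝ := fun t => B' * Q' B' * (1 - t) ^ (-(1/2) : ℝ) with hg
    clear_value g
    have hg_int : IntervalIntegrable g volume 0 1 := by
      rw [hg]
      have h1 : IntervalIntegrable (fun x : ℝ => x ^ (-(1/2) : ℝ)) volume 1 0 :=
        intervalIntegral.intervalIntegrable_rpow' (by norm_num)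
      have h2 := (h1.comp_sub_left 1)
      simp only [sub_self, sub_zero] at h2
      exact h2.const_mul _
    set J : ℝ := ∫ t in (0:ℝ)..1, g t with hJ
    clear_value J
    obtain ⟨N, hN⟩ := exists_nat_gt (2 / Real.pi * J)
    filter_upwards [eventually_ge_atTop (max N 1)] with n hn
    have hn1 : 1 ≤ n := le_trans (le_max_right N 1) hn
    have hnN : N ≤ n := le_trans (le_max_left N 1) hn
    obtain ⟨hapos, heq0⟩ := han n hn1
    have heq : 2 / Real.pi * ∫ t in (0:ℝ)..1, F n t = (n:ℝ) := by
      simp only [hF]; exact heq0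
    by_contra hB
    push_neg at hB
    have hanB' : an n ≤ B' := by rw [hB']; exact le_trans hB.le (le_max_left B 1)
    -- pointwise comparison
    have hptwise : ∀ t ∈ Icc (0:ℝ) 1, F n t ≤ g t := by
      intro t ht
      have hnum : an n * t * Q' (an n * t) ≤ B' * Q' B' := by
        have h1 : an n * t ≤ B' := by
          calc an n * t ≤ an n * 1 := mul_le_mul_of_nonneg_left ht.2 hapos.le
            _ = an n := mul_one _
            _ ≤ B' := hanB'
        exact hmono (an n * t) B' (mul_nonneg hapos.le ht.1) h1
      have hnum0 : 0 ≤ an n * t * Q' (an n * t) :=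
        mul_nonneg (mul_nonneg hapos.le ht.1) (hQ'nn _ (mul_nonneg hapos.le ht.1))
      have hBQ0 : 0 ≤ B' * Q' B' := le_trans hnum0 hnum
      have hsqle : Real.sqrt (1 - t) ≤ Real.sqrt (1 - t ^ 2) := by
        apply Real.sqrt_le_sqrt; nlinarith [ht.1, ht.2]
      have hinv : (Real.sqrt (1 - t ^ 2))⁻¹ ≤ (1 - t) ^ (-(1/2) : ℝ) := by
        rcases eq_or_lt_of_le ht.2 with h1 | h1
        · rw [h1]
          norm_num [Real.zero_rpow]
        · have h1t : 0 < 1 - t := by linarith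
          rw [Real.rpow_neg h1t.le, ← Real.sqrt_eq_rpow]
          have hsp : 0 < Real.sqrt (1 - t) := Real.sqrt_pos.mpr h1t
          exact inv_anti₀ hsp hsqle
      calc F n t = an n * t * Q' (an n * t) * (Real.sqrt (1 - t ^ 2))⁻¹ := by
            simp only [hF]; ring
        _ ≤ B' * Q' B' * (Real.sqrt (1 - t ^ 2))⁻¹ :=
            mul_le_mul_of_nonneg_right hnum (inv_nonneg.mpr (Real.sqrt_nonneg _))
        _ ≤ B' * Q' B' * (1 - t) ^ (-(1/2) : ℝ) :=
            mul_le_mul_of_nonneg_left hinv hBQ0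
        _ = g t := by rw [hg]
    have hle : (n:ℝ) ≤ 2 / Real.pi * J := by
      rw [← heq, hJ]
      apply mul_le_mul_of_nonneg_left _ hpi.le
      exact intervalIntegral.integral_mono_on zero_le_one (hInt n hn1) hg_int hptwise
    have : (N:ℝ) ≤ (n:ℝ) := by exact_mod_cast hnN
    linarith
  -- main limit
  rw [NormedAddCommGroup.tendsto_nhds_zero]
  intro ε hε
  set c₀ : ℝ := 2 / Real.pi * (b - τ') with hc₀
  clear_value c₀
  have hc₀0 : 0 < c₀ := by
    rw [hc₀]; apply mul_pos hpi; linarith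
  set δ : ℝ := (τ' - τ) / τ with hδ
  clear_value δ
  have hδ0 : 0 < δ := by rw [hδ]; exact div_pos (by linarith) hτ0
  set K : ℝ := C / (c₀ * δ * ε) with hK
  clear_value K
  have hK0 : 0 < K := by rw [hK]; exact div_pos hC0 (by positivity)
  obtain ⟨S, hS⟩ := (hT.eventually_ge_atTop K).exists_forall_of_atTop
  filter_upwards [haTop.eventually_ge_atTop (max (S / τ) 1), eventually_ge_atTop 1]
    with n haS hn1
  have hanS : max (S / τ) 1 ≤ an n := haS
  have han1 : (1:ℝ) ≤ an n := le_trans (le_max_right _ _) hanS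
  have hapos : 0 < an n := by linarith
  set x : ℝ := an n * τ with hx
  clear_value x
  set y : ℝ := an n * τ' with hy
  clear_value y
  have hxpos : 0 < x := by rw [hx]; exact mul_pos hapos hτ0
  have hypos : 0 < y := by rw [hy]; exact mul_pos hapos hτ'0
  have hxy : x < y := by
    rw [hx, hy]; exact mul_lt_mul_of_pos_left hττ' hapos
  have hSx : S ≤ x := by
    have h1 : S / τ ≤ an n := le_trans (le_max_left _ _) hanS
    rw [hx]
    calc S = S / τ * τ := (div_mul_cancel₀ S hτ0.ne').symm
      _ ≤ an n * τ := mul_le_mul_of_nonneg_right h1 hτ0.le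
  have hTx : K ≤ x * Q' x / Q x := hS x hSx
  have hQx : 0 < Q x := hQpos x hxpos.ne'
  have hQy : 0 < Q y := hQpos y hypos.ne'
  have hQ'ypos : 0 < Q' y := by
    have h1 := hΛ y hypos.ne'
    have h2 : Λ * Q y ≤ y * Q' y := (le_div_iff₀ hQy).mp h1
    have h3 : 0 < y * Q' y := lt_of_lt_of_le (mul_pos (by linarith) hQy) h2
    rcases (hQ'nn y hypos.le).lt_or_eq with h4 | h4
    · exact h4
    · rw [← h4, mul_zero] at h3
      exact absurd h3 (lt_irrefl 0)
  have hQ'xnn : 0 ≤ Q' x := hQ'nn x hxpos.le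
  -- tangent line: Q y ≥ Q x * (1 + K * δ)
  have hKQ : K * Q x ≤ x * Q' x := (le_div_iff₀ hQx).mp hTx
  have hτδ : τ * δ = τ' - τ := by
    rw [hδ, mul_comm]
    exact div_mul_cancel₀ _ hτ0.ne'
  have hyx : y - x = x * δ := by
    rw [hx, hy]
    calc an n * τ' - an n * τ = an n * (τ * δ) := by rw [hτδ]; ring
      _ = an n * τ * δ := by ring
  have hQylow : Q x * (1 + K * δ) ≤ Q y := by
    have h1 := htan x y hxy
    rw [hyx] at h1
    have h2 : K * Q x * δ ≤ x * Q' x * δ := mul_le_mul_of_nonneg_right hKQ hδ0.le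
    have h3 : Q' x * (x * δ) = x * Q' x * δ := by ring
    rw [h3] at h1
    have h4 : Q x * (1 + K * δ) = Q x + K * Q x * δ := by ring
    linarith
  -- quasi-increasing of T
  have hquasi := hC x y hxpos hxy
  have hxQ'x : x * Q' x ≤ C * (y * Q' y) * (Q x / Q y) := by
    have h2 : x * Q' x / Q x * Q x ≤ C * (y * Q' y / Q y) * Q x :=
      mul_le_mul_of_nonneg_right hquasi hQx.le
    rw [div_mul_cancel₀ _ hQx.ne'] at h2
    calc x * Q' x ≤ C * (y * Q' y / Q y) * Q x := h2
      _ = C * (y * Q' y) * (Q x / Q y) := by ring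
  have hratio : Q x / Q y ≤ 1 / (1 + K * δ) := by
    rw [div_le_div_iff₀ hQy (by positivity)]
    linarith [hQylow]
  have hfinal : x * Q' x ≤ C * (y * Q' y) / (1 + K * δ) := by
    calc x * Q' x ≤ C * (y * Q' y) * (Q x / Q y) := hxQ'x
      _ ≤ C * (y * Q' y) * (1 / (1 + K * δ)) := by
          apply mul_le_mul_of_nonneg_left hratio
          positivity
      _ = C * (y * Q' y) / (1 + K * δ) := by ring
  -- lower bound on n
  have hlown : c₀ * (y * Q' y) ≤ (n:ℝ) := by
    have h := hlow n hn1
    calc c₀ * (y * Q' y) = 2 / Real.pi * ((b - τ') * (an n * τ' * Q' (an n * τ'))) := by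
          rw [hc₀, hy]; ring
      _ ≤ (n:ℝ) := h
  have hnpos : (0:ℝ) < n := by
    have : (1:ℝ) ≤ (n:ℝ) := by exact_mod_cast hn1
    linarith
  have hcy : 0 < c₀ * (y * Q' y) := by positivity
  have hgoalnn : 0 ≤ x * Q' x / n := by positivity
  have hnorm : ‖x * Q' x / (n:ℝ)‖ = x * Q' x / n := by
    rw [Real.norm_eq_abs, abs_of_nonneg hgoalnn]
  rw [hnorm]
  have hstep1 : x * Q' x / n ≤ x * Q' x / (c₀ * (y * Q' y)) :=
    div_le_div_of_nonneg_left (by positivity) hcy hlown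
  have hstep2 : x * Q' x / (c₀ * (y * Q' y)) ≤ C / (c₀ * (1 + K * δ)) := by
    rw [div_le_div_iff₀ hcy (by positivity)]
    calc x * Q' x * (c₀ * (1 + K * δ))
        ≤ C * (y * Q' y) / (1 + K * δ) * (c₀ * (1 + K * δ)) := by
          apply mul_le_mul_of_nonneg_right hfinal
          positivity
      _ = C * (y * Q' y) * (c₀ * ((1 + K * δ)⁻¹ * (1 + K * δ))) := by
          rw [div_eq_mul_inv]; ring
      _ = C * (c₀ * (y * Q' y)) := by
          rw [inv_mul_cancel₀ (by positivity : (1 + K * δ) ≠ 0)]; ring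
  have hstep3 : C / (c₀ * (1 + K * δ)) < ε := by
    rw [div_lt_iff₀ (by positivity)]
    have hKδ : K * δ = C / (c₀ * ε) := by
      rw [hK]
      have h2 : c₀ * δ * ε = c₀ * ε * δ := by ring
      rw [h2, ← div_div, div_mul_cancel₀ _ hδ0.ne']
    have h1 : c₀ * (K * δ) * ε = C := by
      rw [hKδ]
      have h2 : c₀ * (C / (c₀ * ε)) * ε = C / (c₀ * ε) * (c₀ * ε) := by ring
      rw [h2, div_mul_cancel₀ _ (mul_pos hc₀0 hε).ne']
    have h3 : ε * (c₀ * (1 + K * δ)) = ε * c₀ + c₀ * (K * δ) * ε := by ring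
    linarith [mul_pos hε hc₀0]
  linarith
end
end

section
/- Let W = e^{−Q} ∈ F(C²) with Q even, and suppose the function T(t) = tQ'(t)/Q(t) satisfies lim_{x→∞} T(x) = ∞. Then lim_{n→∞} (1/(nπ)) ∫_{−a_n}^{a_n} Q(s)/√(a_n² − s²) ds = 0, where a_n is the Mhaskar–Rakhmanov–Saff number. -/
open MeasureTheory ProbabilityTheory Filter Set Topology
open scoped ENNReal NNReal Classical

noncomputable section

namespace Statement16Aux

/-- integrability of `(a - s)^(-1/2)` -/
lemma intRpowSub (a c d : ℝ) :
    IntervalIntegrable (fun s => (a - s) ^ (-(1/2) : ℝ)) volume c d := by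
  have h := (intervalIntegral.intervalIntegrable_rpow'
    (by norm_num : (-1 : ℝ) < -(1/2)) (a := a - c) (b := a - d)).comp_sub_left a
  simpa using h

/-- integrability of `(a + s)^(-1/2)` -/
lemma intRpowAdd (a c d : ℝ) :
    IntervalIntegrable (fun s => (a + s) ^ (-(1/2) : ℝ)) volume c d := by
  have h := (intervalIntegral.intervalIntegrable_rpow'
    (by norm_num : (-1 : ℝ) < -(1/2)) (a := c + a) (b := d + a)).comp_sub_right (-a)
  have h2 : ∀ x : ℝ, (x - -a) ^ (-(1/2) : ℝ) = (a + x) ^ (-(1/2) : ℝ) := by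
    intro x; rw [sub_neg_eq_add, add_comm]
  simp only [h2] at h
  simpa using h

lemma intC {a : ℝ} (ha : 0 ≤ a) :
    ∫ s in (0:ℝ)..a, (a - s) ^ (-(1/2) : ℝ) = 2 * Real.sqrt a := by
  rw [intervalIntegral.integral_comp_sub_left (fun x => x ^ (-(1/2) : ℝ)) a]
  simp only [sub_self, sub_zero]
  rw [integral_rpow (Or.inl (by norm_num))]
  rw [show (-(1/2 : ℝ) + 1) = 1/2 by norm_num,
    Real.zero_rpow (by norm_num : (1/2 : ℝ) ≠ 0), Real.sqrt_eq_rpow]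
  ring

lemma sqrt_inv_bound' {a s : ℝ} (ha : 0 < a) (h0 : 0 ≤ s) (hsa : s ≤ a) :
    (Real.sqrt (a^2 - s^2))⁻¹ ≤ (Real.sqrt a)⁻¹ * (a - s) ^ (-(1/2) : ℝ) := by
  have hrw : (a - s) ^ (-(1/2) : ℝ) = (Real.sqrt (a - s))⁻¹ := by
    rw [show (-(1/2 : ℝ)) = -(1/2 : ℝ) from rfl, Real.rpow_neg (by linarith),
      ← Real.sqrt_eq_rpow]
  rw [hrw, ← mul_inv, ← Real.sqrt_mul ha.le]
  rcases eq_or_lt_of_le hsa with rfl | hs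
  · simp
  · have h1 : 0 < a * (a - s) := by nlinarith
    apply inv_anti₀ (Real.sqrt_pos.2 h1)
    apply Real.sqrt_le_sqrt; nlinarith

lemma sqrt_inv_bound {a s : ℝ} (ha : 0 < a) (h1 : -a ≤ s) (h2 : s ≤ a) :
    (Real.sqrt (a^2 - s^2))⁻¹ ≤
      (Real.sqrt a)⁻¹ * ((a - s) ^ (-(1/2) : ℝ) + (a + s) ^ (-(1/2) : ℝ)) := by
  rcases le_total 0 s with hs | hs
  · have hb := sqrt_inv_bound' ha hs h2
    have h3 : 0 ≤ (Real.sqrt a)⁻¹ * (a + s) ^ (-(1/2) : ℝ) :=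
      mul_nonneg (inv_nonneg.2 (Real.sqrt_nonneg _)) (Real.rpow_nonneg (by linarith) _)
    rw [mul_add]; linarith
  · have hb := sqrt_inv_bound' ha (neg_nonneg.2 hs) (by linarith : -s ≤ a)
    rw [neg_sq, sub_neg_eq_add] at hb
    have h3 : 0 ≤ (Real.sqrt a)⁻¹ * (a - s) ^ (-(1/2) : ℝ) :=
      mul_nonneg (inv_nonneg.2 (Real.sqrt_nonneg _)) (Real.rpow_nonneg (by linarith) _)
    rw [mul_add]; linarith

/-- Key integrability lemma: `φ(s)/√(a²-s²)` is interval integrable on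
subintervals of `[-a, a]` for continuous `φ`. -/
lemma intDiv (φ : ℝ → ℝ) (hφ : Continuous φ) {a : ℝ} (ha : 0 < a) {c d : ℝ}
    (hc : c ∈ Icc (-a) a) (hd : d ∈ Icc (-a) a) :
    IntervalIntegrable (fun s => φ s / Real.sqrt (a^2 - s^2)) volume c d := by
  obtain ⟨K, hK⟩ := (isCompact_Icc : IsCompact (Icc (-a) a)).exists_bound_of_continuousOn
    hφ.continuousOn
  have hK0 : 0 ≤ K := le_trans (norm_nonneg (φ c)) (hK c hc)
  have hmaj : IntervalIntegrable
      (fun s => K * ((Real.sqrt a)⁻¹ *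
        ((a - s) ^ (-(1/2) : ℝ) + (a + s) ^ (-(1/2) : ℝ)))) volume c d :=
    (((intRpowSub a c d).add (intRpowAdd a c d)).const_mul _).const_mul K
  apply hmaj.mono_fun'
  · have m1 : Measurable fun s : ℝ => Real.sqrt (a^2 - s^2) :=
      (Real.continuous_sqrt.comp (continuous_const.sub (continuous_pow 2))).measurable
    exact (hφ.measurable.div m1).aestronglyMeasurable
  · have hsub : Set.uIoc c d ⊆ Icc (-a) a :=
      Set.uIoc_subset_uIcc.trans (Set.uIcc_subset_Icc hc hd)
    filter_upwards [ae_restrict_mem measurableSet_uIoc] with s hs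
    have hs' := hsub hs
    have hb := sqrt_inv_bound ha hs'.1 hs'.2
    have hnorm : ‖φ s / Real.sqrt (a^2 - s^2)‖
        = |φ s| * (Real.sqrt (a^2 - s^2))⁻¹ := by
      rw [Real.norm_eq_abs, abs_div, abs_of_nonneg (Real.sqrt_nonneg _), div_eq_mul_inv]
    rw [hnorm]
    have hKs : |φ s| ≤ K := by simpa [Real.norm_eq_abs] using hK s hs'
    exact mul_le_mul hKs hb (inv_nonneg.2 (Real.sqrt_nonneg _)) hK0

end Statement16Aux

set_option maxHeartbeats 1600000 in
open Statement16Aux in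
/-- Equation (3.6.1) in the proof of Lemma 3.6: for `W = e^{-Q} ∈ F(C²)` with `Q` even and
`T(x) = xQ'(x)/Q(x) → ∞`, one has `lim (1/(nπ)) ∫_{-aₙ}^{aₙ} Q(s)/√(aₙ²-s²) ds = 0`. -/
theorem statement_16
    (Q Q' Q'' W : ℝ → ℝ) (hW : ∀ x, W x = Real.exp (-Q x))
    (hFC2 : IsFC2 Q Q' Q'')
    (hQeven : ∀ x, Q (-x) = Q x)
    (hT : Tendsto (fun x : ℝ => x * Q' x / Q x) atTop atTop)
    (an : ℕ → ℝ) (han : IsMRSeven Q' an) :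
    Tendsto (fun n : ℕ => (1 / (n * Real.pi)) *
        ∫ s in (-(an n))..(an n), Q s / Real.sqrt ((an n) ^ 2 - s ^ 2))
      atTop (𝓝 0) := by
  have hπ : (0:ℝ) < Real.pi := Real.pi_pos
  -- basic facts about Q
  have hQcont : Continuous Q :=
    continuous_iff_continuousAt.2 fun x => (hFC2.hasDeriv x).continuousAt
  have hQ'0 : Q' 0 = 0 := by
    have hmin : IsLocalMin Q 0 :=
      Filter.Eventually.of_forall fun x => by
        rw [hFC2.zeroAtZero]; exact hFC2.nonneg x
    exact hmin.hasDerivAt_eq_zero (hFC2.hasDeriv 0)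
  have hQ'nonneg : ∀ x : ℝ, 0 ≤ x → 0 ≤ Q' x := fun x hx => by
    rw [← hQ'0]; exact hFC2.monoDeriv hx
  have hQmono : MonotoneOn Q (Ici 0) := by
    apply monotoneOn_of_deriv_nonneg (convex_Ici 0) hQcont.continuousOn
    · exact fun x _ => (hFC2.hasDeriv x).differentiableAt.differentiableWithinAt
    · intro x hx
      rw [interior_Ici] at hx
      rw [(hFC2.hasDeriv x).deriv]
      exact hQ'nonneg x (le_of_lt hx)
  have hQpos : ∀ x : ℝ, x ≠ 0 → 0 < Q x := by
    intro x hx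
    rcases (hFC2.nonneg x).lt_or_eq with h | h
    · exact h
    · exfalso
      obtain ⟨Λ, hΛ1, hΛ⟩ := hFC2.lambdaBound
      have := hΛ x hx
      rw [← h, div_zero] at this
      linarith
  -- the key equation in the s-variable
  have key : ∀ n : ℕ, 1 ≤ n →
      ∫ s in (0:ℝ)..(an n), s * Q' s / Real.sqrt ((an n)^2 - s^2)
        = n * Real.pi / 2 := by
    intro n hn
    obtain ⟨ha, hEq⟩ := han n hn
    set a := an n with ha_def
    set g : ℝ → ℝ := fun s => s * Q' s / Real.sqrt (a^2 - s^2) with hg_def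
    have hfun : ∀ t : ℝ, a * t * Q' (a * t) / Real.sqrt (1 - t^2) = a * g (a * t) := by
      intro t
      have h2 : Real.sqrt (a^2 - (a*t)^2) = a * Real.sqrt (1 - t^2) := by
        rw [show a^2 - (a*t)^2 = a^2 * (1 - t^2) by ring,
          Real.sqrt_mul (sq_nonneg a), Real.sqrt_sq ha.le]
      simp only [hg_def, h2]
      rcases eq_or_ne (Real.sqrt (1 - t^2)) 0 with h | h
      · simp [h]
      · field_simp
    have hsubst : ∫ t in (0:ℝ)..1, a * t * Q' (a * t) / Real.sqrt (1 - t^2)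
        = ∫ s in (0:ℝ)..a, g s := by
      calc ∫ t in (0:ℝ)..1, a * t * Q' (a * t) / Real.sqrt (1 - t^2)
          = ∫ t in (0:ℝ)..1, a * g (a * t) := by simp only [hfun]
        _ = a * ∫ t in (0:ℝ)..1, g (a * t) := intervalIntegral.integral_const_mul _ _
        _ = a * (a⁻¹ • ∫ s in (a*0)..(a*1), g s) := by
            rw [intervalIntegral.integral_comp_mul_left g ha.ne']
        _ = ∫ s in (0:ℝ)..a, g s := by
            rw [smul_eq_mul, mul_zero, mul_one, ← mul_assoc, mul_inv_cancel₀ ha.ne', one_mul]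
    rw [hsubst] at hEq
    have hπ' : Real.pi ≠ 0 := hπ.ne'
    field_simp at hEq
    linarith
  -- an tends to infinity
  have hatop : Tendsto an atTop atTop := by
    rw [tendsto_atTop]
    intro R
    set R' := max R 1 with hR'def
    have hR'pos : (0:ℝ) < R' := lt_of_lt_of_le one_pos (le_max_right _ _)
    have hQ'R' : 0 ≤ Q' R' := hQ'nonneg R' hR'pos.le
    filter_upwards [eventually_ge_atTop (⌈4 * R' * Q' R' / Real.pi⌉₊ + 1)] with n hn
    by_contra hcon
    push_neg at hcon
    have hn1 : 1 ≤ n := le_trans (Nat.le_add_left 1 _) hn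
    have haR : an n ≤ R' := le_trans hcon.le (le_max_left _ _)
    obtain ⟨ha, -⟩ := han n hn1
    have hEq := key n hn1
    set a := an n with ha_def
    set g : ℝ → ℝ := fun s => s * Q' s / Real.sqrt (a^2 - s^2) with hg_def
    have hmem0 : (0:ℝ) ∈ Icc (-a) a := ⟨by linarith, ha.le⟩
    have hmema : a ∈ Icc (-a) a := ⟨by linarith, le_refl a⟩
    have hint1 : IntervalIntegrable g volume 0 a := by
      have := intDiv (fun s => s * Q' s) (continuous_id.mul hFC2.contDeriv) ha hmem0 hmema
      exact this
    have hmaj : IntervalIntegrable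
        (fun s => R' * Q' R' * ((Real.sqrt a)⁻¹ * (a - s) ^ (-(1/2) : ℝ))) volume 0 a :=
      ((intRpowSub a 0 a).const_mul _).const_mul _
    have hptw : ∀ s ∈ Icc (0:ℝ) a,
        g s ≤ R' * Q' R' * ((Real.sqrt a)⁻¹ * (a - s) ^ (-(1/2) : ℝ)) := by
      intro s hs
      have h1 : s * Q' s ≤ R' * Q' R' := by
        apply mul_le_mul (le_trans hs.2 haR)
          (hFC2.monoDeriv (le_trans hs.2 haR)) (hQ'nonneg s hs.1) hR'pos.le
      have h2 := sqrt_inv_bound' ha hs.1 hs.2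
      calc g s = (s * Q' s) * (Real.sqrt (a^2 - s^2))⁻¹ := div_eq_mul_inv _ _
        _ ≤ (R' * Q' R') * ((Real.sqrt a)⁻¹ * (a - s) ^ (-(1/2) : ℝ)) :=
            mul_le_mul h1 h2 (inv_nonneg.2 (Real.sqrt_nonneg _))
              (mul_nonneg hR'pos.le hQ'R')
    have hle := intervalIntegral.integral_mono_on ha.le hint1 hmaj hptw
    have hval : ∫ s in (0:ℝ)..a, R' * Q' R' * ((Real.sqrt a)⁻¹ * (a - s) ^ (-(1/2) : ℝ))
        = R' * Q' R' * ((Real.sqrt a)⁻¹ * (2 * Real.sqrt a)) := by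
      rw [intervalIntegral.integral_const_mul, intervalIntegral.integral_const_mul,
        intC ha.le]
    have hsqrt_pos : (0:ℝ) < Real.sqrt a := Real.sqrt_pos.2 ha
    have hval2 : (Real.sqrt a)⁻¹ * (2 * Real.sqrt a) = 2 := by
      field_simp
    rw [hval, hval2] at hle
    rw [hEq] at hle
    -- n * π / 2 ≤ R' * Q' R' * 2, so n ≤ 4 R' Q' R' / π
    have hceil : (4 * R' * Q' R' / Real.pi : ℝ) ≤ (⌈4 * R' * Q' R' / Real.pi⌉₊ : ℝ) :=
      Nat.le_ceil _
    have hcast : ((⌈4 * R' * Q' R' / Real.pi⌉₊ + 1 : ℕ) : ℝ) ≤ (n : ℝ) := by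
      exact_mod_cast hn
    push_cast at hcast
    have hnbound : (n:ℝ) ≤ 4 * R' * Q' R' / Real.pi := by
      rw [le_div_iff₀ hπ]
      nlinarith
    linarith
  -- main ε-argument
  rw [Metric.tendsto_nhds]
  intro ε hε
  -- choose threshold X from hT with level 2/ε
  obtain ⟨X₀, hX₀⟩ := eventually_atTop.1 (hT.eventually_ge_atTop (2/ε))
  set X := max X₀ 1 with hXdef
  have hX1 : (1:ℝ) ≤ X := le_max_right _ _
  have hX0 : (0:ℝ) < X := lt_of_lt_of_le one_pos hX1
  have hQX : 0 ≤ Q X := hFC2.nonneg X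
  set c : ℝ := max 0 (4 * (Q X * X) / Real.pi / ε) with hcdef
  have hc0 : 0 ≤ c := le_max_left _ _
  have hcge : 4 * (Q X * X) / Real.pi / ε ≤ c := le_max_right _ _
  filter_upwards [eventually_ge_atTop 1, hatop.eventually_ge_atTop (X + c + 1)]
    with n hn1 hna
  obtain ⟨ha, -⟩ := han n hn1
  have hEq := key n hn1
  set a := an n with ha_def
  have hXa : X < a := by linarith
  have hn1' : (1:ℝ) ≤ (n:ℝ) := by exact_mod_cast hn1
  have hnπ : (0:ℝ) < (n:ℝ) * Real.pi := by positivity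
  -- memberships
  have hmemneg : -a ∈ Icc (-a) a := ⟨le_refl _, by linarith⟩
  have hmem0 : (0:ℝ) ∈ Icc (-a) a := ⟨by linarith, ha.le⟩
  have hmemX : X ∈ Icc (-a) a := ⟨by linarith, hXa.le⟩
  have hmema : a ∈ Icc (-a) a := ⟨by linarith, le_refl _⟩
  set h : ℝ → ℝ := fun s => Q s / Real.sqrt (a^2 - s^2) with hh_def
  set g : ℝ → ℝ := fun s => s * Q' s / Real.sqrt (a^2 - s^2) with hg_def
  -- integrabilities
  have ih_na0 : IntervalIntegrable h volume (-a) 0 := intDiv Q hQcont ha hmemneg hmem0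
  have ih_0a : IntervalIntegrable h volume 0 a := intDiv Q hQcont ha hmem0 hmema
  have ih_0X : IntervalIntegrable h volume 0 X := intDiv Q hQcont ha hmem0 hmemX
  have ih_Xa : IntervalIntegrable h volume X a := intDiv Q hQcont ha hmemX hmema
  have ig_0a : IntervalIntegrable g volume 0 a :=
    intDiv (fun s => s * Q' s) (continuous_id.mul hFC2.contDeriv) ha hmem0 hmema
  have ig_0X : IntervalIntegrable g volume 0 X :=
    intDiv (fun s => s * Q' s) (continuous_id.mul hFC2.contDeriv) ha hmem0 hmemX
  have ig_Xa : IntervalIntegrable g volume X a :=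
    intDiv (fun s => s * Q' s) (continuous_id.mul hFC2.contDeriv) ha hmemX hmema
  -- nonnegativity of h
  have h_nonneg : ∀ s : ℝ, 0 ≤ h s := fun s =>
    div_nonneg (hFC2.nonneg s) (Real.sqrt_nonneg _)
  -- symmetry: ∫_{-a}^a h = 2 ∫_0^a h
  have hsym : ∫ s in (-a)..a, h s = 2 * ∫ s in (0:ℝ)..a, h s := by
    have hsplit : ∫ s in (-a)..a, h s
        = (∫ s in (-a)..(0:ℝ), h s) + ∫ s in (0:ℝ)..a, h s :=
      (intervalIntegral.integral_add_adjacent_intervals ih_na0 ih_0a).symm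
    have hrefl : ∫ s in (-a)..(0:ℝ), h s = ∫ s in (0:ℝ)..a, h s := by
      have := intervalIntegral.integral_comp_neg (a := (0:ℝ)) (b := a) h
      rw [neg_zero] at this
      rw [← this]
      apply intervalIntegral.integral_congr
      intro s _
      simp only [hh_def, neg_sq, hQeven]
    rw [hsplit, hrefl]; ring
  -- split: ∫_0^a h = ∫_0^X h + ∫_X^a h
  have hsplit2 : ∫ s in (0:ℝ)..a, h s
      = (∫ s in (0:ℝ)..X, h s) + ∫ s in X..a, h s :=
    (intervalIntegral.integral_add_adjacent_intervals ih_0X ih_Xa).symm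
  -- bound on [0,X]
  have hsX : (0:ℝ) < Real.sqrt (a^2 - X^2) := Real.sqrt_pos.2 (by nlinarith)
  have hbound1 : ∫ s in (0:ℝ)..X, h s ≤ Q X * X / Real.sqrt (a^2 - X^2) := by
    have hb : ∀ s ∈ Set.uIoc (0:ℝ) X, ‖h s‖ ≤ Q X / Real.sqrt (a^2 - X^2) := by
      intro s hs
      rw [Set.uIoc_of_le hX0.le] at hs
      have hs0 : 0 ≤ s := hs.1.le
      have hsX' : s ≤ X := hs.2
      have hQs : Q s ≤ Q X := hQmono (mem_Ici.2 hs0) (mem_Ici.2 hX0.le) hsX'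
      have hsqle : Real.sqrt (a^2 - X^2) ≤ Real.sqrt (a^2 - s^2) :=
        Real.sqrt_le_sqrt (by nlinarith)
      rw [Real.norm_eq_abs, abs_of_nonneg (h_nonneg s)]
      exact div_le_div₀ hQX hQs hsX hsqle
    have := intervalIntegral.norm_integral_le_of_norm_le_const hb
    rw [sub_zero, abs_of_nonneg hX0.le] at this
    calc ∫ s in (0:ℝ)..X, h s ≤ ‖∫ s in (0:ℝ)..X, h s‖ := le_abs_self _
      _ ≤ Q X / Real.sqrt (a^2 - X^2) * X := this
      _ = Q X * X / Real.sqrt (a^2 - X^2) := by ring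
  -- bound on [X,a]
  have hbound2 : ∫ s in X..a, h s ≤ (ε/2) * ∫ s in X..a, g s := by
    have hptw : ∀ s ∈ Icc X a, h s ≤ ε/2 * g s := by
      intro s hs
      have hsX₀ : X₀ ≤ s := le_trans (le_max_left _ _) hs.1
      have hs1 : (1:ℝ) ≤ s := le_trans hX1 hs.1
      have hQspos : 0 < Q s := hQpos s (by linarith)
      have hTs : 2/ε ≤ s * Q' s / Q s := hX₀ s hsX₀
      have hmul : (2/ε) * Q s ≤ s * Q' s := by
        rw [le_div_iff₀ hQspos] at hTs
        exact hTs
      have hQs_le : Q s ≤ ε/2 * (s * Q' s) := by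
        have heq : ε/2 * ((2/ε) * Q s) = Q s := by
          field_simp
        have := mul_le_mul_of_nonneg_left hmul (half_pos hε).le
        rw [heq] at this
        exact this
      calc h s = Q s * (Real.sqrt (a^2 - s^2))⁻¹ := div_eq_mul_inv _ _
        _ ≤ (ε/2 * (s * Q' s)) * (Real.sqrt (a^2 - s^2))⁻¹ :=
            mul_le_mul_of_nonneg_right hQs_le (inv_nonneg.2 (Real.sqrt_nonneg _))
        _ = ε/2 * g s := by rw [hg_def]; simp only; rw [div_eq_mul_inv]; ring
    calc ∫ s in X..a, h s ≤ ∫ s in X..a, ε/2 * g s :=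
          intervalIntegral.integral_mono_on hXa.le ih_Xa (ig_Xa.const_mul _) hptw
      _ = (ε/2) * ∫ s in X..a, g s := intervalIntegral.integral_const_mul _ _
  -- ∫_X^a g ≤ ∫_0^a g = nπ/2
  have hg_nonneg : ∀ s ∈ Icc (0:ℝ) X, 0 ≤ g s := fun s hs =>
    div_nonneg (mul_nonneg hs.1 (hQ'nonneg s hs.1)) (Real.sqrt_nonneg _)
  have hgsplit : ∫ s in (0:ℝ)..a, g s
      = (∫ s in (0:ℝ)..X, g s) + ∫ s in X..a, g s :=
    (intervalIntegral.integral_add_adjacent_intervals ig_0X ig_Xa).symm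
  have hg0X : 0 ≤ ∫ s in (0:ℝ)..X, g s :=
    intervalIntegral.integral_nonneg hX0.le hg_nonneg
  have hgXa : ∫ s in X..a, g s ≤ (n:ℝ) * Real.pi / 2 := by
    rw [← hEq, hgsplit]; linarith
  -- combine
  have hI_nonneg : 0 ≤ ∫ s in (-a)..a, h s :=
    intervalIntegral.integral_nonneg (by linarith) (fun s _ => h_nonneg s)
  have hXaint_nonneg : 0 ≤ ∫ s in X..a, h s := by
    exact intervalIntegral.integral_nonneg hXa.le (fun s _ => h_nonneg s)
  have hI : ∫ s in (-a)..a, h s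
      ≤ 2 * (Q X * X / Real.sqrt (a^2 - X^2)) + (ε/2) * ((n:ℝ) * Real.pi) := by
    have h2 : ∫ s in X..a, h s ≤ (ε/2) * ((n:ℝ) * Real.pi / 2) := by
      calc ∫ s in X..a, h s ≤ (ε/2) * ∫ s in X..a, g s := hbound2
        _ ≤ (ε/2) * ((n:ℝ) * Real.pi / 2) :=
            mul_le_mul_of_nonneg_left hgXa (half_pos hε).le
    have harith : 2 * ((ε/2) * ((n:ℝ) * Real.pi / 2)) = (ε/2) * ((n:ℝ) * Real.pi) := by
      ring
    rw [hsym, hsplit2]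
    linarith [hbound1, h2]
  -- smallness of the first term
  set D : ℝ := Q X * X / Real.sqrt (a^2 - X^2) with hDdef
  have hDnonneg : 0 ≤ D := div_nonneg (mul_nonneg hQX hX0.le) (Real.sqrt_nonneg _)
  have hsqrt_big : c + 1 ≤ Real.sqrt (a^2 - X^2) := by
    rw [Real.le_sqrt' (by linarith : (0:ℝ) < c + 1)]
    nlinarith [mul_pos hX0 (show (0:ℝ) < c + 1 by linarith), hna, hc0, hX0]
  have hD_le : D ≤ Q X * X / (c + 1) :=
    div_le_div₀ (mul_nonneg hQX hX0.le) le_rfl (by linarith) hsqrt_big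
  have hsmall : 2 * D / Real.pi < ε / 2 := by
    have h3 : 4 * (Q X * X) ≤ c * (Real.pi * ε) := by
      have hkey := hcge
      rw [div_div, div_le_iff₀ (by positivity : (0:ℝ) < Real.pi * ε)] at hkey
      linarith
    have h4 : 2 * (Q X * X / (c + 1)) / Real.pi < ε / 2 := by
      rw [div_lt_iff₀ hπ, mul_div_assoc', div_lt_iff₀ (by linarith : (0:ℝ) < c + 1)]
      nlinarith [mul_pos hε hπ]
    have h5 : 2 * D / Real.pi ≤ 2 * (Q X * X / (c + 1)) / Real.pi :=
      div_le_div₀ (by positivity) (by linarith) hπ le_rfl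
    linarith
  -- final computation
  rw [Real.dist_eq, sub_zero,
    abs_of_nonneg (mul_nonneg (by positivity) hI_nonneg)]
  have step1 : 1 / ((n:ℝ) * Real.pi) * ∫ s in (-a)..a, h s
      ≤ 1 / ((n:ℝ) * Real.pi) * (2 * D + (ε/2) * ((n:ℝ) * Real.pi)) :=
    mul_le_mul_of_nonneg_left hI (by positivity)
  have step2 : 1 / ((n:ℝ) * Real.pi) * (2 * D + (ε/2) * ((n:ℝ) * Real.pi))
      = 2 * D / ((n:ℝ) * Real.pi) + ε / 2 := by
    field_simp
  have step3 : 2 * D / ((n:ℝ) * Real.pi) ≤ 2 * D / Real.pi :=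
    div_le_div₀ (by positivity) le_rfl hπ (by nlinarith)
  linarith
end
end

section
/- Let W = e^{−Q} ∈ F(C²) with Q even, and suppose the function T(t) = tQ'(t)/Q(t) satisfies lim_{x→∞} T(x) = α for some α ∈ (1, ∞). Then lim_{n→∞} (1/(nπ)) ∫_{−a_n}^{a_n} Q(s)/√(a_n² − s²) ds = 1/α, where a_n is the Mhaskar–Rakhmanov–Saff number. -/
open MeasureTheory ProbabilityTheory Filter Set Topology
open scoped ENNReal NNReal Classical

noncomputable section

section AuxKernel
open intervalIntegral

lemma rpow_half_int : IntervalIntegrable (fun t : ℝ => (1 - t) ^ (-(1/2) : ℝ)) volume 0 1 := by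
  simpa using ((intervalIntegrable_rpow' (a := 0) (b := 1) (r := -(1/2)) (by norm_num)).comp_sub_left 1).symm

lemma sqrt_one_sub_sq_le {t : ℝ} (ht : t ∈ Ioo (0:ℝ) 1) :
    Real.sqrt (1 - t) ≤ Real.sqrt (1 - t ^ 2) := by
  apply Real.sqrt_le_sqrt; nlinarith [ht.1, ht.2]

lemma kernel_integrable {φ : ℝ → ℝ} (hφ : Continuous φ) :
    IntervalIntegrable (fun t => φ t / Real.sqrt (1 - t ^ 2)) volume 0 1 := by
  obtain ⟨C, hC⟩ := (isCompact_Icc (a := (0:ℝ)) (b := 1)).exists_bound_of_continuousOn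
    hφ.continuousOn
  have hC0 : 0 ≤ C := le_trans (abs_nonneg _) (by simpa using hC 0 (by norm_num))
  rw [intervalIntegrable_iff_integrableOn_Ioo_of_le (by norm_num)]
  have hmeas : Measurable (fun t => φ t / Real.sqrt (1 - t ^ 2)) :=
    hφ.measurable.div ((continuous_const.sub (continuous_pow 2)).sqrt).measurable
  apply Integrable.mono' (g := fun t : ℝ => C * (1 - t) ^ (-(1/2):ℝ))
  · exact (rpow_half_int.const_mul C).1.mono_set Ioo_subset_Ioc_self
  · exact hmeas.aestronglyMeasurable.restrict
  · filter_upwards [ae_restrict_mem measurableSet_Ioo] with t ht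
    have h1t : 0 < 1 - t := by linarith [ht.2]
    have hs : 0 < Real.sqrt (1 - t) := Real.sqrt_pos.2 h1t
    have hrw : (1 - t) ^ (-(1/2):ℝ) = 1 / Real.sqrt (1 - t) := by
      rw [Real.rpow_neg h1t.le, Real.sqrt_eq_rpow]; exact (one_div _).symm
    rw [hrw, Real.norm_eq_abs, abs_div, abs_of_nonneg (Real.sqrt_nonneg _), mul_one_div]
    exact div_le_div₀ hC0 (hC t (Ioo_subset_Icc_self ht)) hs (sqrt_one_sub_sq_le ht)

lemma kernel_one : IntervalIntegrable (fun t : ℝ => 1 / Real.sqrt (1 - t ^ 2)) volume 0 1 :=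
  kernel_integrable continuous_const

lemma integral_rpow_half : ∫ t in (0:ℝ)..1, (1 - t) ^ (-(1/2) : ℝ) = 2 := by
  rw [show (∫ t in (0:ℝ)..1, (1 - t) ^ (-(1/2) : ℝ))
      = ∫ t in ((1:ℝ)-1)..((1:ℝ)-0), t ^ (-(1/2) : ℝ) from
    intervalIntegral.integral_comp_sub_left (fun x : ℝ => x ^ (-(1/2):ℝ)) 1]
  rw [integral_rpow (Or.inl (by norm_num))]
  norm_num

lemma kernel_int_le_two : ∫ t in (0:ℝ)..1, 1 / Real.sqrt (1 - t ^ 2) ≤ 2 := by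
  rw [← integral_rpow_half]
  apply intervalIntegral.integral_mono_on (by norm_num) kernel_one rpow_half_int
  intro t ht
  rcases eq_or_lt_of_le ht.2 with h1 | h1
  · subst h1; norm_num
  · have h1t : 0 < 1 - t := by linarith
    have : (1 - t) ^ (-(1/2):ℝ) = 1 / Real.sqrt (1 - t) := by
      rw [Real.rpow_neg h1t.le, Real.sqrt_eq_rpow]; exact (one_div _).symm
    rw [this]
    have hs : 0 < Real.sqrt (1 - t) := Real.sqrt_pos.2 h1t
    exact one_div_le_one_div_of_le hs (Real.sqrt_le_sqrt (by nlinarith [ht.1]))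

lemma div_le_div_nonneg_denom {x y s : ℝ} (h : x ≤ y) (hs : 0 ≤ s) : x / s ≤ y / s := by
  rcases eq_or_lt_of_le hs with h0 | h0
  · simp [← h0]
  · exact (div_le_div_iff_of_pos_right h0).mpr h

lemma sub_integrable {f : ℝ → ℝ} (hf : IntervalIntegrable f volume 0 1) {c d : ℝ}
    (hc : c ∈ Icc (0:ℝ) 1) (hd : d ∈ Icc (0:ℝ) 1) : IntervalIntegrable f volume c d :=
  hf.mono_set (by rw [uIcc_of_le (zero_le_one' ℝ)]; exact uIcc_subset_Icc hc hd)

lemma integral_le_of_subinterval {f : ℝ → ℝ} (hf : IntervalIntegrable f volume 0 1)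
    (hpos : ∀ t ∈ Icc (0:ℝ) 1, 0 ≤ f t) {c : ℝ} (hc : c ∈ Icc (0:ℝ) 1) :
    ∫ t in (0:ℝ)..c, f t ≤ ∫ t in (0:ℝ)..1, f t := by
  have h1 : IntervalIntegrable f volume 0 c := sub_integrable hf (by norm_num) hc
  have h2 : IntervalIntegrable f volume c 1 := sub_integrable hf hc (by norm_num)
  have := intervalIntegral.integral_add_adjacent_intervals h1 h2
  have h3 : 0 ≤ ∫ t in c..1, f t :=
    intervalIntegral.integral_nonneg hc.2 (fun u hu => hpos u ⟨le_trans hc.1 hu.1, hu.2⟩)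
  linarith

lemma main_bound (Q Q' : ℝ → ℝ) (hQc : Continuous Q) (hQ'c : Continuous Q')
    (hQ0 : ∀ x, 0 ≤ Q x) (hQmono : MonotoneOn Q (Ici 0))
    (hQ'0 : ∀ x, 0 ≤ x → 0 ≤ Q' x) (hQ'mono : Monotone Q')
    (α ε M : ℝ) (hα0 : 0 < α) (hε : 0 ≤ ε) (hM : 0 < M)
    (hTM : ∀ x, M ≤ x → |x * Q' x - α * Q x| ≤ ε * Q x) (a : ℝ) (haM : M ≤ a) :
    |(∫ t in (0:ℝ)..1, a * t * Q' (a * t) / Real.sqrt (1 - t ^ 2))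
      - α * ∫ t in (0:ℝ)..1, Q (a * t) / Real.sqrt (1 - t ^ 2)|
      ≤ ε * (∫ t in (0:ℝ)..1, Q (a * t) / Real.sqrt (1 - t ^ 2))
        + 2 * (M * Q' M + α * Q M) := by
  have ha : 0 < a := lt_of_lt_of_le hM haM
  set c : ℝ := M / a with hcdef
  have hc0 : 0 < c := div_pos hM ha
  have hc1 : c ≤ 1 := (div_le_one ha).2 haM
  have hcmem : c ∈ Icc (0:ℝ) 1 := ⟨hc0.le, hc1⟩
  have hac : a * c = M := by rw [hcdef]; field_simp
  set K : ℝ := M * Q' M + α * Q M with hKdef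
  have hQ'M : 0 ≤ Q' M := hQ'0 M hM.le
  have hK0 : 0 ≤ K := by
    rw [hKdef]
    have := hQ0 M
    positivity
  have hψc : Continuous fun t : ℝ => a * t * Q' (a * t) :=
    ((continuous_const.mul continuous_id).mul
      (hQ'c.comp (continuous_const.mul continuous_id)))
  have hφc : Continuous fun t : ℝ => Q (a * t) :=
    hQc.comp (continuous_const.mul continuous_id)
  set h : ℝ → ℝ := fun t => (a * t * Q' (a * t) - α * Q (a * t)) / Real.sqrt (1 - t ^ 2)
    with hhdef
  have Ih : IntervalIntegrable h volume 0 1 :=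
    kernel_integrable (hψc.sub (continuous_const.mul hφc))
  have Iψ : IntervalIntegrable (fun t => a * t * Q' (a * t) / Real.sqrt (1 - t ^ 2)) volume 0 1 :=
    kernel_integrable hψc
  have Iφ : IntervalIntegrable (fun t => Q (a * t) / Real.sqrt (1 - t ^ 2)) volume 0 1 :=
    kernel_integrable hφc
  -- pointwise nonneg facts
  have hψnn : ∀ t ∈ Icc (0:ℝ) 1, 0 ≤ a * t * Q' (a * t) := by
    intro t ht
    exact mul_nonneg (mul_nonneg ha.le ht.1) (hQ'0 _ (mul_nonneg ha.le ht.1))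
  have hφnn : ∀ t : ℝ, 0 ≤ Q (a * t) / Real.sqrt (1 - t ^ 2) :=
    fun t => div_nonneg (hQ0 _) (Real.sqrt_nonneg _)
  -- step 1 : difference of integrals = integral of h
  have step1 : (∫ t in (0:ℝ)..1, a * t * Q' (a * t) / Real.sqrt (1 - t ^ 2))
      - α * ∫ t in (0:ℝ)..1, Q (a * t) / Real.sqrt (1 - t ^ 2)
      = ∫ t in (0:ℝ)..1, h t := by
    rw [← intervalIntegral.integral_const_mul, ← intervalIntegral.integral_sub Iψ
      (Iφ.const_mul α)]
    apply intervalIntegral.integral_congr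
    intro t _
    simp only [hhdef]
    ring
  -- step 2 : split
  have Ih1 : IntervalIntegrable h volume 0 c := sub_integrable Ih (by norm_num) hcmem
  have Ih2 : IntervalIntegrable h volume c 1 := sub_integrable Ih hcmem (by norm_num)
  have step2 : (∫ t in (0:ℝ)..1, h t) = (∫ t in (0:ℝ)..c, h t) + ∫ t in c..1, h t :=
    (intervalIntegral.integral_add_adjacent_intervals Ih1 Ih2).symm
  -- step 3 : bound on [0, c]
  have step3 : |∫ t in (0:ℝ)..c, h t| ≤ 2 * K := by
    refine (intervalIntegral.abs_integral_le_integral_abs hc0.le).trans ?_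
    have hmono : ∀ t ∈ Icc (0:ℝ) c, |h t| ≤ K * (1 / Real.sqrt (1 - t ^ 2)) := by
      intro t ht
      have htc : t ≤ c := ht.2
      have ht0 : 0 ≤ t := ht.1
      have hat0 : 0 ≤ a * t := mul_nonneg ha.le ht0
      have hatM : a * t ≤ M := by
        rw [← hac]; exact mul_le_mul_of_nonneg_left htc ha.le
      have h1 : a * t * Q' (a * t) ≤ M * Q' M :=
        mul_le_mul hatM (hQ'mono hatM) (hQ'0 _ hat0) hM.le
      have h2 : Q (a * t) ≤ Q M := hQmono hat0 hM.le hatM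
      have hnum : |a * t * Q' (a * t) - α * Q (a * t)| ≤ K := by
        rw [abs_sub_comm]
        refine (abs_sub _ _).trans ?_
        rw [abs_of_nonneg (mul_nonneg hα0.le (hQ0 _)),
          abs_of_nonneg (mul_nonneg hat0 (hQ'0 _ hat0))]
        have := mul_le_mul_of_nonneg_left h2 hα0.le
        simp only [hKdef]; linarith
      calc |h t| = |a * t * Q' (a * t) - α * Q (a * t)| / Real.sqrt (1 - t ^ 2) := by
            rw [hhdef]; rw [abs_div, abs_of_nonneg (Real.sqrt_nonneg _)]
        _ ≤ K / Real.sqrt (1 - t ^ 2) := div_le_div_nonneg_denom hnum (Real.sqrt_nonneg _)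
        _ = K * (1 / Real.sqrt (1 - t ^ 2)) := by rw [mul_one_div]
    calc (∫ t in (0:ℝ)..c, |h t|)
        ≤ ∫ t in (0:ℝ)..c, K * (1 / Real.sqrt (1 - t ^ 2)) :=
          intervalIntegral.integral_mono_on hc0.le Ih1.abs
            ((kernel_one.const_mul K).mono_set
              (by rw [uIcc_of_le (zero_le_one' ℝ)]; exact uIcc_subset_Icc (by norm_num) hcmem))
            hmono
      _ = K * ∫ t in (0:ℝ)..c, 1 / Real.sqrt (1 - t ^ 2) :=
          intervalIntegral.integral_const_mul _ _
      _ ≤ K * 2 := by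
          refine mul_le_mul_of_nonneg_left ?_ hK0
          exact (integral_le_of_subinterval kernel_one
            (fun t _ => div_nonneg one_pos.le (Real.sqrt_nonneg _)) hcmem).trans
            kernel_int_le_two
      _ = 2 * K := mul_comm _ _
  -- step 4 : bound on [c, 1]
  have step4 : |∫ t in c..1, h t|
      ≤ ε * ∫ t in (0:ℝ)..1, Q (a * t) / Real.sqrt (1 - t ^ 2) := by
    refine (intervalIntegral.abs_integral_le_integral_abs hc1).trans ?_
    have hmono : ∀ t ∈ Icc c 1, |h t| ≤ ε * (Q (a * t) / Real.sqrt (1 - t ^ 2)) := by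
      intro t ht
      have hMat : M ≤ a * t := by
        rw [← hac]; exact mul_le_mul_of_nonneg_left ht.1 ha.le
      have hnum : |a * t * Q' (a * t) - α * Q (a * t)| ≤ ε * Q (a * t) := hTM _ hMat
      calc |h t| = |a * t * Q' (a * t) - α * Q (a * t)| / Real.sqrt (1 - t ^ 2) := by
            rw [hhdef]; rw [abs_div, abs_of_nonneg (Real.sqrt_nonneg _)]
        _ ≤ ε * Q (a * t) / Real.sqrt (1 - t ^ 2) :=
            div_le_div_nonneg_denom hnum (Real.sqrt_nonneg _)
        _ = ε * (Q (a * t) / Real.sqrt (1 - t ^ 2)) := mul_div_assoc _ _ _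
    calc (∫ t in c..1, |h t|)
        ≤ ∫ t in c..1, ε * (Q (a * t) / Real.sqrt (1 - t ^ 2)) :=
          intervalIntegral.integral_mono_on hc1 Ih2.abs
            ((Iφ.const_mul ε).mono_set
              (by rw [uIcc_of_le (zero_le_one' ℝ)]; exact uIcc_subset_Icc hcmem (by norm_num)))
            hmono
      _ = ε * ∫ t in c..1, Q (a * t) / Real.sqrt (1 - t ^ 2) :=
          intervalIntegral.integral_const_mul _ _
      _ ≤ ε * ∫ t in (0:ℝ)..1, Q (a * t) / Real.sqrt (1 - t ^ 2) := by
          refine mul_le_mul_of_nonneg_left ?_ hε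
          have h1 : IntervalIntegrable (fun t => Q (a*t) / Real.sqrt (1 - t^2)) volume 0 c :=
            sub_integrable Iφ (by norm_num) hcmem
          have h2 : IntervalIntegrable (fun t => Q (a*t) / Real.sqrt (1 - t^2)) volume c 1 :=
            sub_integrable Iφ hcmem (by norm_num)
          have := intervalIntegral.integral_add_adjacent_intervals h1 h2
          have h3 : 0 ≤ ∫ t in (0:ℝ)..c, Q (a*t) / Real.sqrt (1 - t^2) :=
            intervalIntegral.integral_nonneg hc0.le (fun u _ => hφnn u)
          linarith
  calc |(∫ t in (0:ℝ)..1, a * t * Q' (a * t) / Real.sqrt (1 - t ^ 2))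
      - α * ∫ t in (0:ℝ)..1, Q (a * t) / Real.sqrt (1 - t ^ 2)|
      = |(∫ t in (0:ℝ)..c, h t) + ∫ t in c..1, h t| := by rw [step1, step2]
    _ ≤ |∫ t in (0:ℝ)..c, h t| + |∫ t in c..1, h t| := abs_add_le _ _
    _ ≤ 2 * K + ε * ∫ t in (0:ℝ)..1, Q (a * t) / Real.sqrt (1 - t ^ 2) := add_le_add step3 step4
    _ = ε * (∫ t in (0:ℝ)..1, Q (a * t) / Real.sqrt (1 - t ^ 2)) + 2 * K := by ring

lemma cov (Q : ℝ → ℝ) (hQc : Continuous Q) (hQeven : ∀ x, Q (-x) = Q x)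
    (a : ℝ) (ha : 0 < a) :
    (∫ s in (-a)..a, Q s / Real.sqrt (a ^ 2 - s ^ 2))
      = 2 * ∫ t in (0:ℝ)..1, Q (a * t) / Real.sqrt (1 - t ^ 2) := by
  set f : ℝ → ℝ := fun s => Q s / Real.sqrt (a ^ 2 - s ^ 2) with hfdef
  have key : ∀ t : ℝ, f (a * t) = (1 / a) * (Q (a * t) / Real.sqrt (1 - t ^ 2)) := by
    intro t
    have h1 : a ^ 2 - (a * t) ^ 2 = a ^ 2 * (1 - t ^ 2) := by ring
    rw [hfdef]
    simp only
    rw [h1, Real.sqrt_mul (sq_nonneg a), Real.sqrt_sq ha.le, div_mul_div_comm, one_mul]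
  have hφc : Continuous fun t : ℝ => Q (a * t) := hQc.comp (continuous_const.mul continuous_id)
  have IF : IntervalIntegrable (fun t => Q (a * t) / Real.sqrt (1 - t ^ 2)) volume 0 1 :=
    kernel_integrable hφc
  have Ifa : IntervalIntegrable (fun t => f (a * t)) volume 0 1 := by
    have := IF.const_mul (1 / a)
    exact this.congr (fun t _ => (key t).symm)
  have heq : (fun x : ℝ => f (-x)) = f := funext fun x => by
    simp only [hfdef, neg_sq]; rw [hQeven]
  have If0a : IntervalIntegrable f volume 0 a := by
    have h := IntervalIntegrable.comp_mul_left_iff (c := a) (f := f) (a := 0) (b := a) ha.ne'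
    rw [zero_div, div_self ha.ne'] at h
    exact h.1 Ifa
  have Ifneg : IntervalIntegrable f volume (-a) 0 := by
    have h2 := (IntervalIntegrable.iff_comp_neg (f := f) (a := 0) (b := a)).1 If0a
    rw [heq] at h2
    simpa using h2.symm
  have hsplit : (∫ s in (-a)..a, f s) = (∫ s in (-a)..0, f s) + ∫ s in (0:ℝ)..a, f s :=
    (intervalIntegral.integral_add_adjacent_intervals Ifneg If0a).symm
  have heven : (∫ s in (-a)..0, f s) = ∫ s in (0:ℝ)..a, f s := by
    calc (∫ s in (-a)..0, f s) = ∫ s in (-a)..(-0:ℝ), f s := by norm_num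
      _ = ∫ x in (0:ℝ)..a, f (-x) := (intervalIntegral.integral_comp_neg f).symm
      _ = ∫ x in (0:ℝ)..a, f x := by rw [show (fun x : ℝ => f (-x)) = f from heq]
  have hcv : (∫ s in (0:ℝ)..a, f s) = ∫ t in (0:ℝ)..1, Q (a * t) / Real.sqrt (1 - t ^ 2) := by
    have h := intervalIntegral.integral_comp_mul_left (a := 0) (b := 1) f ha.ne'
    rw [mul_zero, mul_one, smul_eq_mul] at h
    have h2 : (∫ t in (0:ℝ)..1, f (a * t))
        = (1 / a) * ∫ t in (0:ℝ)..1, Q (a * t) / Real.sqrt (1 - t ^ 2) := by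
      simp only [key]
      exact intervalIntegral.integral_const_mul _ _
    rw [h2] at h
    rw [eq_comm]
    field_simp at h ⊢
    linarith
  rw [hsplit, heven, hcv]
  ring

section assembly
open Real

lemma G_upper (Q' : ℝ → ℝ) (hQ'c : Continuous Q') (hQ'0 : ∀ x, 0 ≤ x → 0 ≤ Q' x)
    (hQ'mono : Monotone Q') (R a : ℝ) (ha : 0 < a) (haR : a ≤ R) :
    (∫ t in (0:ℝ)..1, a * t * Q' (a * t) / Real.sqrt (1 - t ^ 2)) ≤ R * Q' R * 2 := by
  have hR0 : 0 < R := lt_of_lt_of_le ha haR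
  have hψc : Continuous fun t : ℝ => a * t * Q' (a * t) :=
    (continuous_const.mul continuous_id).mul (hQ'c.comp (continuous_const.mul continuous_id))
  have hK0 : 0 ≤ R * Q' R := mul_nonneg hR0.le (hQ'0 R hR0.le)
  calc (∫ t in (0:ℝ)..1, a * t * Q' (a * t) / Real.sqrt (1 - t ^ 2))
      ≤ ∫ t in (0:ℝ)..1, R * Q' R * (1 / Real.sqrt (1 - t ^ 2)) := by
        refine intervalIntegral.integral_mono_on (by norm_num) (kernel_integrable hψc)
          (kernel_one.const_mul _) ?_
        intro t ht
        have hat0 : 0 ≤ a * t := mul_nonneg ha.le ht.1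
        have hatR : a * t ≤ R := le_trans (by nlinarith [ht.2]) haR
        have h1 : a * t * Q' (a * t) ≤ R * Q' R :=
          mul_le_mul hatR (hQ'mono hatR) (hQ'0 _ hat0) hR0.le
        calc a * t * Q' (a * t) / Real.sqrt (1 - t ^ 2)
            ≤ R * Q' R / Real.sqrt (1 - t ^ 2) :=
              div_le_div_nonneg_denom h1 (Real.sqrt_nonneg _)
          _ = R * Q' R * (1 / Real.sqrt (1 - t ^ 2)) := by rw [mul_one_div]
    _ = R * Q' R * ∫ t in (0:ℝ)..1, 1 / Real.sqrt (1 - t ^ 2) :=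
        intervalIntegral.integral_const_mul _ _
    _ ≤ R * Q' R * 2 := mul_le_mul_of_nonneg_left kernel_int_le_two hK0

end assembly

end AuxKernel

/-- The key computation in the proof of Lemma 3.7: for `W = e^{-Q} ∈ F(C²)` with `Q` even
and `T(x) = xQ'(x)/Q(x) → α ∈ (1,∞)`, one has
`lim (1/(nπ)) ∫_{-aₙ}^{aₙ} Q(s)/√(aₙ²-s²) ds = 1/α`. -/
theorem statement_17
    (Q Q' Q'' W : ℝ → ℝ) (hW : ∀ x, W x = Real.exp (-Q x))
    (hFC2 : IsFC2 Q Q' Q'')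
    (hQeven : ∀ x, Q (-x) = Q x)
    (α : ℝ) (hα : 1 < α)
    (hT : Tendsto (fun x : ℝ => x * Q' x / Q x) atTop (𝓝 α))
    (an : ℕ → ℝ) (han : IsMRSeven Q' an) :
    Tendsto (fun n : ℕ => (1 / (n * Real.pi)) *
        ∫ s in (-(an n))..(an n), Q s / Real.sqrt ((an n) ^ 2 - s ^ 2))
      atTop (𝓝 (1 / α)) := by
  have hπ : (0:ℝ) < Real.pi := Real.pi_pos
  have hα0 : (0:ℝ) < α := lt_trans one_pos hα
  -- basic consequences of IsFC2
  have hQdiff : Differentiable ℝ Q := fun x => (hFC2.hasDeriv x).differentiableAt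
  have hQc : Continuous Q := hQdiff.continuous
  have hQ'zero : Q' 0 = 0 := by
    have hmin : IsLocalMin Q 0 :=
      Filter.Eventually.of_forall (fun x => by rw [hFC2.zeroAtZero]; exact hFC2.nonneg x)
    exact hmin.hasDerivAt_eq_zero (hFC2.hasDeriv 0)
  have hQ'nn : ∀ x, 0 ≤ x → 0 ≤ Q' x := fun x hx => hQ'zero ▸ hFC2.monoDeriv hx
  have hQmono : MonotoneOn Q (Ici 0) := by
    apply monotoneOn_of_deriv_nonneg (convex_Ici 0) hQc.continuousOn
    · exact fun x _ => (hFC2.hasDeriv x).differentiableAt.differentiableWithinAt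
    · intro x hx
      rw [interior_Ici] at hx
      rw [(hFC2.hasDeriv x).deriv]
      exact hQ'nn x (le_of_lt hx)
  have hQpos : ∀ x, 0 < x → 0 < Q x := by
    obtain ⟨Λ, hΛ, hΛle⟩ := hFC2.lambdaBound
    intro x hx
    rcases (hFC2.nonneg x).eq_or_lt with h | h
    · exfalso
      have := hΛle x hx.ne'
      rw [← h, div_zero] at this
      linarith
    · exact h
  -- abbreviations
  set F : ℝ → ℝ := fun a => ∫ t in (0:ℝ)..1, Q (a * t) / Real.sqrt (1 - t ^ 2) with hFdef
  set G : ℝ → ℝ := fun a => ∫ t in (0:ℝ)..1, a * t * Q' (a * t) / Real.sqrt (1 - t ^ 2)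
    with hGdef
  have hGn : ∀ n : ℕ, 1 ≤ n → G (an n) = n * Real.pi / 2 := by
    intro n hn
    have h := (han n hn).2
    rw [hGdef]
    field_simp at h ⊢
    linarith
  have hF0 : ∀ a, 0 ≤ F a := fun a =>
    intervalIntegral.integral_nonneg (by norm_num)
      (fun t _ => div_nonneg (hFC2.nonneg _) (Real.sqrt_nonneg _))
  -- an tends to infinity
  have hanpos : ∀ n : ℕ, 1 ≤ n → 0 < an n := fun n hn => (han n hn).1
  have hantop : Tendsto an atTop atTop := by
    rw [tendsto_atTop]
    intro R
    set R' : ℝ := max R 1 with hR'def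
    have hR'0 : (0:ℝ) < R' := lt_of_lt_of_le one_pos (le_max_right _ _)
    have hB : Tendsto (fun n : ℕ => (n : ℝ)) atTop atTop := tendsto_natCast_atTop_atTop
    filter_upwards [hB.eventually (eventually_gt_atTop (2 * (R' * Q' R' * 2) / Real.pi)),
      eventually_ge_atTop 1] with n h1 h2
    by_contra hcon
    push_neg at hcon
    have hanR' : an n ≤ R' := le_trans hcon.le (le_max_left _ _)
    have hle := G_upper Q' hFC2.contDeriv hQ'nn hFC2.monoDeriv R' (an n) (hanpos n h2) hanR'
    have hle' : G (an n) ≤ R' * Q' R' * 2 := hle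
    rw [hGn n h2] at hle'
    have h3 : 2 * (R' * Q' R' * 2) < (n:ℝ) * Real.pi := (div_lt_iff₀ hπ).1 h1
    linarith [hle']
  -- the main limit for F/G
  have key : Tendsto (fun n : ℕ => F (an n) / G (an n)) atTop (𝓝 (1 / α)) := by
    rw [Metric.tendsto_atTop]
    intro δ hδ
    set ε : ℝ := min (min ((α - 1) / 2) 1) (δ * α / 4) with hεdef
    have hε0 : 0 < ε := by
      rw [hεdef]
      have : 0 < δ * α / 4 := by positivity
      simp only [lt_min_iff]
      refine ⟨⟨by linarith, one_pos⟩, this⟩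
    have hεle1 : ε ≤ (α - 1) / 2 := le_trans (min_le_left _ _) (min_le_left _ _)
    have hεle2 : ε ≤ 1 := le_trans (min_le_left _ _) (min_le_right _ _)
    have hεle3 : ε ≤ δ * α / 4 := min_le_right _ _
    -- choose M
    obtain ⟨M₀, hM₀⟩ := (Metric.tendsto_nhds.1 hT ε hε0).exists_forall_of_atTop
    set M : ℝ := max M₀ 1 with hMdef
    have hM0 : (0:ℝ) < M := lt_of_lt_of_le one_pos (le_max_right _ _)
    have hTM : ∀ x, M ≤ x → |x * Q' x - α * Q x| ≤ ε * Q x := by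
      intro x hx
      have hx0 : 0 < x := lt_of_lt_of_le hM0 hx
      have hQx : 0 < Q x := hQpos x hx0
      have h := hM₀ x (le_trans (le_max_left _ _) hx)
      rw [Real.dist_eq] at h
      have heq : x * Q' x - α * Q x = (x * Q' x / Q x - α) * Q x := by
        field_simp
      rw [heq, abs_mul, abs_of_pos hQx]
      exact mul_le_mul_of_nonneg_right h.le hQx.le
    set C : ℝ := 2 * (M * Q' M + α * Q M) with hCdef
    have hC0 : 0 ≤ C := by
      rw [hCdef]
      have h1 := hQ'nn M hM0.le
      have h2 := hFC2.nonneg M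
      positivity
    have hbound : ∀ a, M ≤ a → |G a - α * F a| ≤ ε * F a + C := by
      intro a ha
      exact main_bound Q Q' hQc hFC2.contDeriv hFC2.nonneg hQmono hQ'nn hFC2.monoDeriv
        α ε M hα0 hε0.le hM0 hTM a ha
    -- choose N
    set T0 : ℝ := max (8 * C / (α * δ)) 1 with hT0def
    have hB : Tendsto (fun n : ℕ => (n : ℝ)) atTop atTop := tendsto_natCast_atTop_atTop
    obtain ⟨N, hN⟩ := (((hantop.eventually (eventually_ge_atTop M)).and
      ((eventually_ge_atTop 1).and
        (hB.eventually (eventually_ge_atTop (2 * T0 / Real.pi))))).and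
          (Filter.eventually_atTop.2 ⟨0, fun _ _ => trivial⟩)).exists_forall_of_atTop
    refine ⟨N, fun n hn => ?_⟩
    obtain ⟨⟨hanM, hn1, hnT0⟩, -⟩ := hN n hn
    set Fn : ℝ := F (an n) with hFndef
    set Gn : ℝ := G (an n) with hGndef
    have hFn0 : 0 ≤ Fn := hF0 _
    have hGnval : Gn = n * Real.pi / 2 := hGn n hn1
    have hGnT0 : T0 ≤ Gn := by
      rw [hGnval]
      have := (div_le_iff₀ hπ).1 hnT0
      linarith
    have hGn1 : (1:ℝ) ≤ Gn := le_trans (le_max_right _ _) hGnT0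
    have hGn0 : 0 < Gn := lt_of_lt_of_le one_pos hGn1
    have hGnC : 8 * C / (α * δ) ≤ Gn := le_trans (le_max_left _ _) hGnT0
    have h8C : 8 * C ≤ α * δ * Gn := by
      rw [div_le_iff₀ (by positivity : (0:ℝ) < α * δ)] at hGnC
      linarith
    have hb : |Gn - α * Fn| ≤ ε * Fn + C := hbound (an n) hanM
    -- Fn ≤ Gn + C
    have hFle : Fn ≤ Gn + C := by
      have h1 : α * Fn - Gn ≤ |Gn - α * Fn| := by
        rw [abs_sub_comm]; exact le_abs_self _
      nlinarith
    rw [Real.dist_eq]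
    have heq : Fn / Gn - 1 / α = (α * Fn - Gn) / (α * Gn) := by
      field_simp
    rw [heq, abs_div, abs_of_pos (by positivity : (0:ℝ) < α * Gn), abs_sub_comm]
    rw [div_lt_iff₀ (by positivity : (0:ℝ) < α * Gn)]
    calc |Gn - α * Fn| ≤ ε * Fn + C := hb
      _ < δ * (α * Gn) := by nlinarith
  -- transfer to the original expression
  refine Tendsto.congr' ?_ key
  filter_upwards [eventually_ge_atTop 1] with n hn1
  have hpos := hanpos n hn1
  have hcv := cov Q hQc hQeven (an n) hpos
  have hn0 : (0:ℝ) < (n:ℝ) := by exact_mod_cast hn1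
  show F (an n) / G (an n) = _
  rw [hcv, hGn n hn1]
  have hFrfl : (∫ t in (0:ℝ)..1, Q (an n * t) / Real.sqrt (1 - t ^ 2)) = F (an n) := rfl
  rw [hFrfl]
  field_simp
end
end
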